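/- arXiv:1703.08165 — 2 statements merged into one kernel-verified Lean document; each statement's English description precedes it below -/
import Mathlib

section
/- Let f be holomorphic on 𝔻×𝔻 and define f̃(z,t) = f(z, (t+z)/(1+z̄t)). Then f̃ satisfies the equation ∂f̃/∂z̄ + (t(t+z)/(1-|z|²)) ∂f̃/∂t = 0 on 𝔻×𝔻. -/
open Complex Metric

/-- Wirtinger derivative ∂/∂z̄ of a (not necessarily holomorphic) function of one complex
variable, defined via the real Fréchet derivative. -/
noncomputable def wirtingerDzbar (f : ℂ → ℂ) (z : ℂ) : ℂ :=
  (fderiv ℝ f z 1 + Complex.I • fderiv ℝ f z Complex.I) / 2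

/-- Wirtinger derivative ∂/∂z. -/
noncomputable def wirtingerDz (f : ℂ → ℂ) (z : ℂ) : ℂ :=
  (fderiv ℝ f z 1 - Complex.I • fderiv ℝ f z Complex.I) / 2

lemma wirtingerDz_eq_deriv (g : ℂ → ℂ) (x : ℂ) (hg : DifferentiableAt ℂ g x) :
    wirtingerDz g x = deriv g x := by
  have h1 : fderiv ℝ g x = (fderiv ℂ g x).restrictScalars ℝ :=
    (hg.hasFDerivAt.restrictScalars ℝ).fderiv
  have h2 : (fderiv ℂ g x) Complex.I = Complex.I * (fderiv ℂ g x) 1 := by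
    have := (fderiv ℂ g x).map_smul Complex.I (1:ℂ)
    simpa [smul_eq_mul] using this
  have hd : deriv g x = fderiv ℂ g x 1 := rfl
  rw [wirtingerDz, h1]
  simp only [ContinuousLinearMap.coe_restrictScalars']
  rw [h2, hd, smul_eq_mul, ← mul_assoc, Complex.I_mul_I]
  ring

theorem stmt6 (f : ℂ → ℂ → ℂ)
    (hf : DifferentiableOn ℂ (fun p : ℂ × ℂ => f p.1 p.2) (ball 0 1 ×ˢ ball 0 1))
    (ftilde : ℂ → ℂ → ℂ)
    (hft : ftilde = fun z t => f z ((t + z) / (1 + (starRingEnd ℂ) z * t)))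
    (z t : ℂ) (hz : z ∈ ball (0:ℂ) 1) (ht : t ∈ ball (0:ℂ) 1) :
    wirtingerDzbar (fun z' => ftilde z' t) z
      + t * (t + z) / (1 - (‖z‖ : ℂ) ^ 2) * wirtingerDz (fun t' => ftilde z t') t
      = 0 := by
  subst hft
  simp only [mem_ball, dist_zero_right] at hz ht
  set Dv : ℂ := 1 + (starRingEnd ℂ) z * t with hDv
  -- key positivity
  have key : Complex.normSq Dv - Complex.normSq (t + z)
      = (1 - Complex.normSq z) * (1 - Complex.normSq t) := by
    simp [hDv, Complex.normSq_apply, Complex.add_re, Complex.add_im, Complex.mul_re,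
      Complex.mul_im, Complex.conj_re, Complex.conj_im]
    ring
  have hz2 : Complex.normSq z < 1 := by
    have := Complex.sq_norm z ▸ (pow_lt_one₀ (norm_nonneg z) hz two_ne_zero)
    simpa using this
  have ht2 : Complex.normSq t < 1 := by
    have := Complex.sq_norm t ▸ (pow_lt_one₀ (norm_nonneg t) ht two_ne_zero)
    simpa using this
  have hpos : 0 < (1 - Complex.normSq z) * (1 - Complex.normSq t) := by
    apply mul_pos <;> linarith
  have hltn : Complex.normSq (t + z) < Complex.normSq Dv := by linarith
  have hDpos : 0 < Complex.normSq Dv := lt_of_le_of_lt (Complex.normSq_nonneg _) hltn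
  have hD : Dv ≠ 0 := by
    intro h; rw [h] at hDpos; simp at hDpos
  set w : ℂ := (t + z) * Dv⁻¹ with hw
  have hwball : w ∈ ball (0:ℂ) 1 := by
    rw [mem_ball, dist_zero_right]
    have habs : ‖t+z‖ < ‖Dv‖ :=
      lt_of_pow_lt_pow_left₀ 2 (norm_nonneg _)
        (by rw [Complex.sq_norm, Complex.sq_norm]; exact hltn)
    calc ‖w‖ = ‖t+z‖ / ‖Dv‖ := by
          rw [hw, norm_mul, norm_inv, div_eq_mul_inv]
      _ < 1 := (div_lt_one (norm_pos_iff.mpr hD)).mpr habs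
  have hzball : z ∈ ball (0:ℂ) 1 := by simpa [mem_ball, dist_zero_right] using hz
  -- f differentiable at (z, w)
  have hfd : DifferentiableAt ℂ (fun p : ℂ × ℂ => f p.1 p.2) (z, w) :=
    hf.differentiableAt ((isOpen_ball.prod isOpen_ball).mem_nhds ⟨hzball, hwball⟩)
  set L := fderiv ℂ (fun p : ℂ × ℂ => f p.1 p.2) (z, w) with hLdef
  have hL : HasFDerivAt (fun p : ℂ × ℂ => f p.1 p.2) L (z, w) := hfd.hasFDerivAt
  set a : ℂ := L (1, 0) with ha
  set b : ℂ := L (0, 1) with hb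
  have hLlin : ∀ u v : ℂ, L (u, v) = u * a + v * b := by
    intro u v
    have huv : (u, v) = u • ((1:ℂ), (0:ℂ)) + v • ((0:ℂ), (1:ℂ)) := by
      simp [Prod.ext_iff]
    rw [huv, map_add, map_smul, map_smul, smul_eq_mul, smul_eq_mul]
  -- derivative of the Möbius map in z' (real)
  have hden : HasFDerivAt (fun z' : ℂ => 1 + (starRingEnd ℂ) z' * t)
      (0 + t • (Complex.conjCLE : ℂ ≃L[ℝ] ℂ).toContinuousLinearMap) z :=
    (hasFDerivAt_const (1:ℂ) z).add ((Complex.conjCLE.hasFDerivAt).mul_const t)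
  have hinv : HasFDerivAt (fun z' : ℂ => (1 + (starRingEnd ℂ) z' * t)⁻¹)
      ((((1 : ℂ →L[ℂ] ℂ).smulRight (-(Dv^2)⁻¹)).restrictScalars ℝ).comp
        (0 + t • (Complex.conjCLE : ℂ ≃L[ℝ] ℂ).toContinuousLinearMap)) z :=
    ((hasDerivAt_inv hD).hasFDerivAt.restrictScalars ℝ).comp z hden
  have hnum : HasFDerivAt (fun z' : ℂ => t + z')
      (0 + ContinuousLinearMap.id ℝ ℂ) z :=
    (hasFDerivAt_const t z).add (hasFDerivAt_id z)
  have hphi := hnum.mul hinv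
  set Lphi := (t + z) • ((((1 : ℂ →L[ℂ] ℂ).smulRight (-(Dv^2)⁻¹)).restrictScalars ℝ).comp
        (0 + t • (Complex.conjCLE : ℂ ≃L[ℝ] ℂ).toContinuousLinearMap))
      + Dv⁻¹ • (0 + ContinuousLinearMap.id ℝ ℂ) with hLphi
  have hphi' : HasFDerivAt (fun z' : ℂ => (t + z') * (1 + (starRingEnd ℂ) z' * t)⁻¹) Lphi z := by
    exact hphi
  -- the full map in z'
  have hF : HasFDerivAt (fun z' : ℂ => f z' ((t + z') * (1 + (starRingEnd ℂ) z' * t)⁻¹))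
      ((L.restrictScalars ℝ).comp ((ContinuousLinearMap.id ℝ ℂ).prod Lphi)) z :=
    by have := (hL.restrictScalars ℝ).comp z ((hasFDerivAt_id z).prodMk hphi'); exact this
  -- values of Lphi
  have hphi1 : Lphi 1 = (t + z) * (t * (-(Dv^2)⁻¹)) + Dv⁻¹ := by
    simp [hLphi, smul_eq_mul]
  have hphiI : Lphi Complex.I = (t + z) * ((t * (-Complex.I)) * (-(Dv^2)⁻¹)) + Dv⁻¹ * Complex.I := by
    simp [hLphi, smul_eq_mul, Complex.conj_I]
  -- wirtingerDzbar of the z-map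
  have hzbar : wirtingerDzbar (fun z' => f z' ((t + z') / (1 + (starRingEnd ℂ) z' * t))) z
      = b * (-(t + z) * t * (Dv^2)⁻¹) := by
    have heq : (fun z' => f z' ((t + z') / (1 + (starRingEnd ℂ) z' * t)))
        = fun z' => f z' ((t + z') * (1 + (starRingEnd ℂ) z' * t)⁻¹) := by
      funext z'; rw [div_eq_mul_inv]
    rw [heq, wirtingerDzbar, hF.fderiv]
    simp only [ContinuousLinearMap.comp_apply, ContinuousLinearMap.prod_apply,
      ContinuousLinearMap.coe_restrictScalars', ContinuousLinearMap.id_apply]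
    rw [hphi1, hphiI, hLlin, hLlin, smul_eq_mul]
    field_simp
    ring_nf
    simp only [Complex.I_sq]
    ring
  -- derivative in t
  have hinnt : HasDerivAt (fun t' : ℂ => 1 + (starRingEnd ℂ) z * t') ((starRingEnd ℂ) z) t := by
    simpa using ((hasDerivAt_id t).const_mul ((starRingEnd ℂ) z)).const_add 1
  have hinvt : HasDerivAt (fun t' : ℂ => (1 + (starRingEnd ℂ) z * t')⁻¹)
      (-(Dv^2)⁻¹ * (starRingEnd ℂ) z) t := (hasDerivAt_inv hD).comp t hinnt
  have hnumt : HasDerivAt (fun t' : ℂ => t' + z) 1 t := by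
    simpa using (hasDerivAt_id t).add_const z
  have hphit : HasDerivAt (fun t' : ℂ => (t' + z) * (1 + (starRingEnd ℂ) z * t')⁻¹)
      (1 * Dv⁻¹ + (t + z) * (-(Dv^2)⁻¹ * (starRingEnd ℂ) z)) t := hnumt.mul hinvt
  have hbF : HasFDerivAt (fun w' : ℂ => f z w')
      (L.comp (((0 : ℂ →L[ℂ] ℂ)).prod (ContinuousLinearMap.id ℂ ℂ))) w :=
    hL.comp w ((hasFDerivAt_const z w).prodMk (hasFDerivAt_id w))
  have hbD : HasDerivAt (fun w' : ℂ => f z w') b w := by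
    have := hbF.hasDerivAt
    simpa [hb] using this
  have hgt : HasDerivAt (fun t' : ℂ => f z ((t' + z) * (1 + (starRingEnd ℂ) z * t')⁻¹))
      (b * (1 * Dv⁻¹ + (t + z) * (-(Dv^2)⁻¹ * (starRingEnd ℂ) z))) t := hbD.comp t hphit
  have hdt : wirtingerDz (fun t' => f z ((t' + z) / (1 + (starRingEnd ℂ) z * t'))) t
      = b * (1 * Dv⁻¹ + (t + z) * (-(Dv^2)⁻¹ * (starRingEnd ℂ) z)) := by
    have heq : (fun t' => f z ((t' + z) / (1 + (starRingEnd ℂ) z * t')))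
        = fun t' => f z ((t' + z) * (1 + (starRingEnd ℂ) z * t')⁻¹) := by
      funext t'; rw [div_eq_mul_inv]
    rw [heq, wirtingerDz_eq_deriv _ _ hgt.differentiableAt, hgt.deriv]
  rw [hzbar, hdt]
  have habs : ((‖z‖ : ℝ) : ℂ)^2 = (starRingEnd ℂ) z * z := by
    rw [mul_comm, Complex.mul_conj]
    norm_cast
    exact Complex.sq_norm z
  rw [habs]
  have h1 : (1 : ℂ) - (starRingEnd ℂ) z * z ≠ 0 := by
    intro h
    have : ((1 - Complex.normSq z : ℝ) : ℂ) = 0 := by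
      rw [← h]; push_cast; rw [← Complex.mul_conj]; ring
    have : (1 - Complex.normSq z : ℝ) = 0 := by exact_mod_cast this
    linarith
  have h1' : (1 : ℂ) - z * (starRingEnd ℂ) z ≠ 0 := by rwa [mul_comm] at h1
  have hD' : (1 + (starRingEnd ℂ) z * t) ≠ 0 := hD
  rw [hDv]
  field_simp
  ring
end

section
/- Let γ be a Möbius transformation of the unit disk and ψ(τ) = γ'(τ)^N for an integer N ≥ 2. Then for z ≠ w in the disk, (w-z)^N ∫₀¹ γ'(z+s(w-z))^N · s^{N-1}(1-s)^{N-1}/B(N,N) ds = (γ(w) - γ(z))^N. -/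
open Complex Metric intervalIntegral

open Finset in
private lemma phi_deriv (m : ℕ) (x : ℂ) :
    HasDerivAt (fun y : ℂ => ∑ k ∈ range (m + 1),
        ((m.choose k : ℂ) * (-1) ^ k / ((m + 1 + k : ℕ) : ℂ)) * y ^ (m + 1 + k))
      (x ^ m * (1 - x) ^ m) x := by
  have h : ∀ k ∈ range (m + 1), HasDerivAt
      (fun y : ℂ => ((m.choose k : ℂ) * (-1) ^ k / ((m + 1 + k : ℕ) : ℂ)) * y ^ (m + 1 + k))
      (((m.choose k : ℂ) * (-1) ^ k / ((m + 1 + k : ℕ) : ℂ)) *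
        (((m + 1 + k : ℕ) : ℂ) * x ^ (m + k))) x := by
    intro k _
    simpa [show m + 1 + k - 1 = m + k by omega] using
      (hasDerivAt_pow (m + 1 + k) x).const_mul
        ((m.choose k : ℂ) * (-1) ^ k / ((m + 1 + k : ℕ) : ℂ))
  have hsum := HasDerivAt.fun_sum h
  refine hsum.congr_deriv ?_
  have hb : (1 - x) ^ m = ∑ k ∈ range (m + 1), (-x) ^ k * 1 ^ (m - k) * (m.choose k : ℂ) := by
    rw [show (1 : ℂ) - x = -x + 1 by ring]
    exact add_pow (-x) 1 m
  rw [hb, Finset.mul_sum]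
  refine Finset.sum_congr rfl fun k hk => ?_
  have hn : ((m + 1 + k : ℕ) : ℂ) ≠ 0 := Nat.cast_ne_zero.mpr (by omega)
  rw [show ((m.choose k : ℂ)) * (-1)^k / ((m+1+k : ℕ):ℂ) * (((m+1+k:ℕ):ℂ) * x^(m+k))
      = ((m.choose k:ℂ) * (-1)^k) * ((((m+1+k:ℕ):ℂ) / ((m+1+k:ℕ):ℂ)) * x^(m+k)) by ring,
    div_self hn]
  ring

set_option maxHeartbeats 1000000 in
theorem stmt19 (N : ℕ) (hN : 2 ≤ N) (α β : ℂ)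
    (h : ‖α‖ ^ 2 - ‖β‖ ^ 2 = 1)
    (γ : ℂ → ℂ) (hγ : γ = fun τ => (α * τ + β) / ((starRingEnd ℂ) β * τ + (starRingEnd ℂ) α))
    (z w : ℂ) (hz : z ∈ ball (0:ℂ) 1) (hw : w ∈ ball (0:ℂ) 1) (hzw : z ≠ w) :
    (w - z) ^ N * ∫ s in (0:ℝ)..1,
        (deriv γ (z + s • (w - z))) ^ N
          * ((s : ℂ) ^ (N - 1) * ((1 : ℂ) - s) ^ (N - 1)
            * (((2 * N - 1).factorial : ℂ) / (((N - 1).factorial : ℂ) ^ 2)))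
      = (γ w - γ z) ^ N := by
  obtain ⟨m, rfl⟩ : ∃ m, N = m + 2 := ⟨N - 2, by omega⟩
  clear hN
  simp only [show m + 2 - 1 = m + 1 by omega, show 2 * (m + 2) - 1 = 2 * m + 3 by omega]
  -- basic facts about α, β
  have hkey : α * (starRingEnd ℂ) α - β * (starRingEnd ℂ) β = 1 := by
    rw [Complex.mul_conj, Complex.mul_conj, ← Complex.ofReal_sub, ← Complex.sq_norm,
      ← Complex.sq_norm, h, Complex.ofReal_one]
  have habs : ‖β‖ < ‖α‖ ∧ 1 ≤ ‖α‖ := by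
    constructor <;> nlinarith [norm_nonneg α, norm_nonneg β]
  have hden : ∀ τ : ℂ, τ ∈ ball (0:ℂ) 1 →
      (starRingEnd ℂ) β * τ + (starRingEnd ℂ) α ≠ 0 := by
    intro τ hτ H
    rw [mem_ball_zero_iff] at hτ
    have h2 : ‖(starRingEnd ℂ) α‖ = ‖-((starRingEnd ℂ) β * τ)‖ := by
      rw [show (starRingEnd ℂ) α = -((starRingEnd ℂ) β * τ) from by linear_combination H]
    simp only [Complex.norm_conj, norm_neg, norm_mul] at h2
    nlinarith [norm_nonneg β, norm_nonneg τ]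
  -- derivative of γ
  have hγ' : ∀ τ ∈ ball (0:ℂ) 1,
      HasDerivAt γ (1 / ((starRingEnd ℂ) β * τ + (starRingEnd ℂ) α) ^ 2) τ := by
    intro τ hτ
    have hd := hden τ hτ
    have h1 : HasDerivAt (fun τ : ℂ => α * τ + β) α τ := by
      simpa using ((hasDerivAt_id τ).const_mul α).add_const β
    have h2 : HasDerivAt (fun τ : ℂ => (starRingEnd ℂ) β * τ + (starRingEnd ℂ) α)
        ((starRingEnd ℂ) β) τ := by
      simpa using ((hasDerivAt_id τ).const_mul ((starRingEnd ℂ) β)).add_const ((starRingEnd ℂ) α)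
    have := h1.div h2 hd
    rw [hγ]
    refine this.congr_deriv ?_
    rw [show α * ((starRingEnd ℂ) β * τ + (starRingEnd ℂ) α) - (α * τ + β) * (starRingEnd ℂ) β
        = 1 from by linear_combination hkey]
  set a : ℂ := (starRingEnd ℂ) β * z + (starRingEnd ℂ) α with ha_def
  set b : ℂ := (starRingEnd ℂ) β * w + (starRingEnd ℂ) α with hb_def
  have ha : a ≠ 0 := hden z hz
  have hb : b ≠ 0 := hden w hw
  have hmem : ∀ s : ℝ, s ∈ Set.uIcc (0:ℝ) 1 → z + s • (w - z) ∈ ball (0:ℂ) 1 := by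
    intro s hs
    rw [Set.uIcc_of_le zero_le_one] at hs
    exact (convex_ball (0:ℂ) 1).add_smul_sub_mem hz hw hs
  have hca : ∀ s : ℝ, (starRingEnd ℂ) β * (z + s • (w - z)) + (starRingEnd ℂ) α
      = a + (s:ℂ) * (b - a) := by
    intro s
    rw [ha_def, hb_def]
    simp only [Complex.real_smul]
    ring
  have hc : ∀ s : ℝ, s ∈ Set.uIcc (0:ℝ) 1 → a + (s:ℂ) * (b - a) ≠ 0 := by
    intro s hs
    rw [← hca s]
    exact hden _ (hmem s hs)
  -- Φ and FTC
  set Φ : ℂ → ℂ := fun y : ℂ => ∑ k ∈ Finset.range (m + 1 + 1),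
      (((m + 1).choose k : ℂ) * (-1) ^ k / ((m + 1 + 1 + k : ℕ) : ℂ)) * y ^ (m + 1 + 1 + k)
    with hΦ_def
  have hΦ : ∀ x : ℂ, HasDerivAt Φ (x ^ (m+1) * (1 - x) ^ (m+1)) x := fun x => phi_deriv (m+1) x
  -- FTC for the straight path: beta integral
  have E2 : (∫ s in (0:ℝ)..1, (s:ℂ) ^ (m+1) * (1 - (s:ℂ)) ^ (m+1)) = Φ 1 - Φ 0 := by
    have := intervalIntegral.integral_eq_sub_of_hasDerivAt
      (f := fun t : ℝ => Φ (t:ℂ))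
      (f' := fun s : ℝ => (s:ℂ) ^ (m+1) * (1 - (s:ℂ)) ^ (m+1))
      (fun s _ => (hΦ (s:ℂ)).comp_ofReal)
      ((Continuous.intervalIntegrable (by fun_prop) 0 1))
    simpa using this
  -- value of the beta integral
  have hbeta : (∫ s in (0:ℝ)..1, (s:ℂ) ^ (m+1) * (1 - (s:ℂ)) ^ (m+1))
      = ((m+1).factorial : ℂ) ^ 2 / ((2*m+3).factorial : ℂ) := by
    have h1 : Complex.betaIntegral ((m:ℂ)+2) ((m:ℂ)+2)
        = ∫ s in (0:ℝ)..1, (s:ℂ) ^ (m+1) * (1 - (s:ℂ)) ^ (m+1) := by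
      rw [Complex.betaIntegral]
      refine intervalIntegral.integral_congr fun s _ => ?_
      rw [show (m:ℂ) + 2 - 1 = ((m+1 : ℕ) : ℂ) by push_cast; ring,
        Complex.cpow_natCast, Complex.cpow_natCast]
    have h2 := Complex.Gamma_mul_Gamma_eq_betaIntegral
      (s := (m:ℂ)+2) (t := (m:ℂ)+2) (by simp; positivity) (by simp; positivity)
    have hg1 : Complex.Gamma ((m:ℂ)+2) = ((m+1).factorial : ℂ) := by
      have := Complex.Gamma_nat_eq_factorial (m+1)
      rw [show (((m+1:ℕ)):ℂ) + 1 = (m:ℂ)+2 by push_cast; ring] at this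
      exact this
    have hg2 : Complex.Gamma ((m:ℂ)+2+((m:ℂ)+2)) = ((2*m+3).factorial : ℂ) := by
      have := Complex.Gamma_nat_eq_factorial (2*m+3)
      rw [show (((2*m+3:ℕ)):ℂ) + 1 = (m:ℂ)+2+((m:ℂ)+2) by push_cast; ring] at this
      exact this
    rw [hg1, hg2, h1] at h2
    have hf : ((2*m+3).factorial : ℂ) ≠ 0 := Nat.cast_ne_zero.mpr (Nat.factorial_ne_zero _)
    field_simp
    linear_combination -h2
  -- FTC for the Möbius path
  have E1 : (∫ s in (0:ℝ)..1, (b*(s:ℂ)/(a+(s:ℂ)*(b-a))) ^ (m+1)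
        * (1 - b*(s:ℂ)/(a+(s:ℂ)*(b-a))) ^ (m+1) * (a*b/(a+(s:ℂ)*(b-a))^2))
      = Φ 1 - Φ 0 := by
    have hccont : Continuous (fun s : ℝ => a + (s:ℂ)*(b-a)) := by fun_prop
    have hucont : ContinuousOn (fun s : ℝ => b*(s:ℂ)/(a+(s:ℂ)*(b-a))) (Set.uIcc (0:ℝ) 1) :=
      ContinuousOn.div (by fun_prop) hccont.continuousOn hc
    have hint : IntervalIntegrable (fun s : ℝ => (b*(s:ℂ)/(a+(s:ℂ)*(b-a))) ^ (m+1)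
        * (1 - b*(s:ℂ)/(a+(s:ℂ)*(b-a))) ^ (m+1) * (a*b/(a+(s:ℂ)*(b-a))^2)) MeasureTheory.volume 0 1 :=
      (((hucont.pow _).mul ((continuousOn_const.sub hucont).pow _)).mul
        (ContinuousOn.div continuousOn_const (hccont.pow 2).continuousOn
          (fun s hs => pow_ne_zero 2 (hc s hs)))).intervalIntegrable
    have hderiv : ∀ s ∈ Set.uIcc (0:ℝ) 1,
        HasDerivAt (fun t : ℝ => Φ (b*(t:ℂ)/(a+(t:ℂ)*(b-a))))
          ((b*(s:ℂ)/(a+(s:ℂ)*(b-a))) ^ (m+1)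
            * (1 - b*(s:ℂ)/(a+(s:ℂ)*(b-a))) ^ (m+1) * (a*b/(a+(s:ℂ)*(b-a))^2)) s := by
      intro s hs
      have hcs := hc s hs
      have hU : HasDerivAt (fun t : ℂ => b * t / (a + t*(b-a))) (a*b/(a+(s:ℂ)*(b-a))^2) (s:ℂ) := by
        have h1 : HasDerivAt (fun t : ℂ => b * t) b (s:ℂ) := by
          simpa using (hasDerivAt_id ((s:ℂ))).const_mul b
        have h2 : HasDerivAt (fun t : ℂ => a + t*(b-a)) (b-a) (s:ℂ) := by
          simpa using ((hasDerivAt_id ((s:ℂ))).mul_const (b-a)).const_add a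
        have := h1.div h2 hcs
        refine this.congr_deriv ?_
        rw [show b * (a + (s:ℂ)*(b-a)) - b*(s:ℂ)*(b-a) = a*b from by ring]
      have := ((hΦ _).comp (s:ℂ) hU).comp_ofReal
      simpa [Function.comp] using this
    have := intervalIntegral.integral_eq_sub_of_hasDerivAt hderiv hint
    rw [this]
    congr 1
    · congr 1
      push_cast
      rw [show a + 1*(b-a) = b by ring]
      field_simp
    · congr 1
      simp
  -- rewrite the integrand
  have hEq : Set.EqOn
      (fun s : ℝ => (deriv γ (z + s • (w - z))) ^ (m+2)
        * ((s : ℂ) ^ (m+1) * ((1 : ℂ) - s) ^ (m+1)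
          * (((2*m+3).factorial : ℂ) / (((m+1).factorial : ℂ) ^ 2))))
      (fun s : ℝ => ((((2*m+3).factorial : ℂ) / (((m+1).factorial : ℂ) ^ 2)) / (a*b)^(m+2))
        * ((b*(s:ℂ)/(a+(s:ℂ)*(b-a))) ^ (m+1)
          * (1 - b*(s:ℂ)/(a+(s:ℂ)*(b-a))) ^ (m+1) * (a*b/(a+(s:ℂ)*(b-a))^2)))
      (Set.uIcc (0:ℝ) 1) := by
    intro s hs
    have hcs := hc s hs
    have hds : deriv γ (z + s • (w - z)) = 1 / (a + (s:ℂ)*(b-a)) ^ 2 := by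
      rw [(hγ' _ (hmem s hs)).deriv, hca s]
    simp only [hds]
    rw [show (1:ℂ) - b*(s:ℂ)/(a+(s:ℂ)*(b-a)) = a*(1-(s:ℂ))/(a+(s:ℂ)*(b-a)) from by
      field_simp; ring]
    generalize ((2*m+3).factorial : ℂ) / (((m+1).factorial : ℂ) ^ 2) = K
    generalize hcg : a + (s:ℂ) * (b - a) = c at hcs
    have e1 : (b*(s:ℂ)/c)^(m+1) * (a*(1-(s:ℂ))/c)^(m+1) * (a*b/c^2)
        = (a*b/c^2)^(m+2) * ((s:ℂ)^(m+1) * (1-(s:ℂ))^(m+1)) := by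
      rw [← mul_pow, show b*(s:ℂ)/c * (a*(1-(s:ℂ))/c) = a*b/c^2 * ((s:ℂ)*(1-(s:ℂ))) by
        field_simp, mul_pow, mul_pow]
      ring
    rw [e1, div_pow (a*b), div_pow 1, one_pow]
    have hC : (c^2)^(m+2) ≠ 0 := pow_ne_zero _ (pow_ne_zero _ hcs)
    have hA : (a*b)^(m+2) ≠ 0 := pow_ne_zero _ (mul_ne_zero ha hb)
    field_simp
  rw [intervalIntegral.integral_congr hEq, intervalIntegral.integral_const_mul, E1, ← E2, hbeta]
  -- final algebra
  have hγwz : γ w - γ z = (w - z) / (a * b) := by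
    rw [hγ]
    simp only
    rw [← hb_def, ← ha_def, div_sub_div _ _ hb ha, div_eq_div_iff (mul_ne_zero hb ha)
      (mul_ne_zero ha hb)]
    rw [ha_def, hb_def]
    linear_combination (w - z) * ((starRingEnd ℂ) β * w + (starRingEnd ℂ) α)
      * ((starRingEnd ℂ) β * z + (starRingEnd ℂ) α) * hkey
  rw [hγwz, div_pow]
  have hf1 : (((m+1).factorial : ℂ)) ≠ 0 := Nat.cast_ne_zero.mpr (Nat.factorial_ne_zero _)
  have hf2 : (((2*m+3).factorial : ℂ)) ≠ 0 := Nat.cast_ne_zero.mpr (Nat.factorial_ne_zero _)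
  have hab : (a*b)^(m+2) ≠ 0 := pow_ne_zero _ (mul_ne_zero ha hb)
  field_simp
end
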